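/- Let G be a finite group with |G| = d, and let B, C ⊆ G with |C| ≤ κx and |B| ≤ κx², where x ≥ 1 is a real number and κ > 0. If d > (117/8)·κ²·x⁴ and m = ⌈9x/2⌉ ≥ 2, then there exists a tuple (g_1,...,g_m) ∈ G^m such that g_k⁻¹g_j ∉ C·C⁻¹ for all j < k and g_s ∉ B·C⁻¹ for all s. -/
import Mathlib


open Pointwise

/-- If `|G| = d > (117/8)·κ²·x⁴`, `|C| ≤ κx`, `|B| ≤ κx²` and `m = ⌈9x/2⌉ ≥ 2`,
then there is an `m`-tuple avoiding `C·C⁻¹` for all differences and `B·C⁻¹` for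
all coordinates. -/
theorem stmt_2 (G : Type*) [Group G] [Fintype G] [DecidableEq G]
    (B C : Finset G) (κ x : ℝ) (hκ : 0 < κ) (hx : 1 ≤ x)
    (hC : (C.card : ℝ) ≤ κ * x) (hB : (B.card : ℝ) ≤ κ * x ^ 2)
    (d : ℕ) (hd : d = Fintype.card G)
    (hdbig : (117 / 8) * κ ^ 2 * x ^ 4 < (d : ℝ))
    (m : ℕ) (hmdef : m = ⌈9 * x / 2⌉₊) (hm : 2 ≤ m) :
    ∃ g : Fin m → G,
      (∀ j k : Fin m, j < k → (g k)⁻¹ * g j ∉ C * C⁻¹) ∧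
      (∀ s : Fin m, g s ∉ B * C⁻¹) := by
  set T : Finset G := C * C⁻¹ with hT
  set S : Finset G := B * C⁻¹ with hS
  have hC0 : (0:ℝ) ≤ (C.card : ℝ) := Nat.cast_nonneg _
  have hB0 : (0:ℝ) ≤ (B.card : ℝ) := Nat.cast_nonneg _
  have hTcard : (T.card : ℝ) ≤ κ ^ 2 * x ^ 2 := by
    have h1 : (T.card : ℝ) ≤ (C.card : ℝ) * (C⁻¹.card : ℝ) := by
      exact_mod_cast Finset.card_mul_le
    rw [Finset.card_inv] at h1
    nlinarith
  have hScard : (S.card : ℝ) ≤ κ ^ 2 * x ^ 3 := by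
    have h1 : (S.card : ℝ) ≤ (B.card : ℝ) * (C⁻¹.card : ℝ) := by
      exact_mod_cast Finset.card_mul_le
    rw [Finset.card_inv] at h1
    nlinarith
  have hTsym : T⁻¹ = T := by rw [hT, mul_inv_rev, inv_inv]
  -- bound on m
  have hmlt : (m : ℝ) < 9 * x / 2 + 1 := by
    rw [hmdef]
    exact Nat.ceil_lt_add_one (by positivity)
  -- key recursion
  have key : ∀ n : ℕ, n ≤ m → ∃ g : Fin n → G,
      (∀ j k : Fin n, j < k → (g k)⁻¹ * g j ∉ T) ∧ (∀ s : Fin n, g s ∉ S) := by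
    intro n
    induction n with
    | zero => exact fun _ => ⟨Fin.elim0, fun j => j.elim0, fun s => s.elim0⟩
    | succ n ih =>
      intro hn
      obtain ⟨g, hg1, hg2⟩ := ih (le_trans (Nat.le_succ n) hn)
      set F : Finset G := S ∪ Finset.univ.biUnion (fun j : Fin n => g j • T) with hF
      have hFcard : (F.card : ℝ) < Fintype.card G := by
        have h1 : F.card ≤ S.card + n * T.card := by
          calc F.card ≤ S.card + (Finset.univ.biUnion fun j : Fin n => g j • T).card :=
                Finset.card_union_le _ _
            _ ≤ S.card + ∑ _j : Fin n, T.card := by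
                gcongr
                refine le_trans Finset.card_biUnion_le ?_
                exact Finset.sum_le_sum fun j _ => le_of_eq (Finset.card_smul_finset _ _)
            _ = S.card + n * T.card := by simp [Finset.sum_const, mul_comm]
        have h1' : (F.card : ℝ) ≤ (S.card : ℝ) + (n : ℝ) * (T.card : ℝ) := by
          exact_mod_cast h1
        have hnle : (n : ℝ) ≤ 9 * x / 2 := by
          have : (n : ℝ) + 1 ≤ (m : ℝ) := by exact_mod_cast hn
          linarith
        have hT0 : (0:ℝ) ≤ (T.card : ℝ) := Nat.cast_nonneg _
        have hd' : (117 / 8) * κ ^ 2 * x ^ 4 < ((Fintype.card G : ℕ) : ℝ) := by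
          rwa [hd] at hdbig
        nlinarith [mul_le_mul hnle hTcard hT0 (by positivity : (0:ℝ) ≤ 9 * x / 2),
          sq_nonneg κ, sq_nonneg x, mul_pos hκ hκ]
      obtain ⟨h, hh⟩ : ∃ h : G, h ∉ F := by
        by_contra hc
        push_neg at hc
        have : F = Finset.univ := Finset.eq_univ_iff_forall.2 hc
        rw [this, Finset.card_univ] at hFcard
        exact lt_irrefl _ hFcard
      have hhS : h ∉ S := fun hmem => hh (Finset.mem_union_left _ hmem)
      have hhT : ∀ j : Fin n, h⁻¹ * g j ∉ T := by
        intro j hmem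
        apply hh
        refine Finset.mem_union_right _ (Finset.mem_biUnion.2 ⟨j, Finset.mem_univ _, ?_⟩)
        have : (h⁻¹ * g j)⁻¹ ∈ T := by
          rw [← hTsym]; exact Finset.inv_mem_inv hmem
        refine Finset.mem_smul_finset.2 ⟨(h⁻¹ * g j)⁻¹, this, ?_⟩
        simp [smul_eq_mul, mul_assoc]
      refine ⟨Fin.snoc g h, ?_, ?_⟩
      · intro j k
        refine Fin.lastCases ?_ (fun k' => ?_) k
        · refine Fin.lastCases ?_ (fun j' => ?_) j
          · intro hlt; exact absurd hlt (lt_irrefl _)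
          · intro _
            simp only [Fin.snoc_last, Fin.snoc_castSucc]
            exact hhT j'
        · refine Fin.lastCases ?_ (fun j' => ?_) j
          · intro hlt
            have := hlt
            simp only [Fin.lt_def, Fin.val_last, Fin.coe_castSucc] at this
            omega
          · intro hlt
            simp only [Fin.snoc_castSucc]
            exact hg1 j' k' (Fin.castSucc_lt_castSucc_iff.mp hlt)
      · intro s
        refine Fin.lastCases ?_ (fun s' => ?_) s
        · simpa only [Fin.snoc_last] using hhS
        · simpa only [Fin.snoc_castSucc] using hg2 s'
  obtain ⟨g, hg1, hg2⟩ := key m le_rfl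
  exact ⟨g, hg1, hg2⟩
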